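/- arXiv:1706.05918 — 3 statements merged into one kernel-verified Lean document; each statement's English description precedes it below -/
import Mathlib

section
/- Let (T_n, t_n, a_n) be a Warlimont triple with log(a_n) = O(n), and let R be a positive integer. If T_{n-1} = o(T_n) and a_1·t_n = ∑_{s=0}^{R-1} β_s·T_{n-s} + O(T_{n-R}) (with β the inverse sequence of T), then t_{n-1} = o(t_n) and T_n = a_1·∑_{s=0}^{R-1} T_s·t_{n-s} + O(t_{n-R}). -/
open PowerSeries Finset

/-- The power series `∑_{k≥0} a_k x^{km}`. -/
noncomputable def innerSeries (a : ℕ → ℝ) (m : ℕ) : PowerSeries ℝ :=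
  PowerSeries.mk fun j => if m ∣ j then a (j / m) else 0

/-- The Euler-product identity `∑_{n≥0} T_n x^n = ∏_{m≥1} (∑_{k≥0} a_k x^{km})^{t_m}`,
expressed coefficientwise: the factors with `m > n` do not affect the `n`-th
coefficient, so the infinite product may be truncated at `m = n`. -/
def WarlimontEq (T : ℕ → ℝ) (t : ℕ → ℕ) (a : ℕ → ℝ) : Prop :=
  ∀ n : ℕ, PowerSeries.coeff n (PowerSeries.mk T) =
    PowerSeries.coeff n (∏ m ∈ Finset.Icc 1 n, (innerSeries a m) ^ (t m))

/-- A Warlimont triple: nonnegative sequences satisfying the Euler-product identity,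
with `T_0 = a_0 = 1`, `a_1 > 0` and the `t_m` nonnegative integers. -/
structure IsWarlimontTriple (T : ℕ → ℝ) (t : ℕ → ℕ) (a : ℕ → ℝ) : Prop where
  hT_nonneg : ∀ n, 0 ≤ T n
  ha_nonneg : ∀ n, 0 ≤ a n
  hT0 : T 0 = 1
  ha0 : a 0 = 1
  ha1 : 0 < a 1
  heq : WarlimontEq T t a


open Filter Asymptotics

/-! Since `T_{n-1} = o(T_n)`, every shift `T_{n-k}` with `k ≥ 1` is `o(T_n)`, so the hypothesis
gives `a_1 t_n ~ T_n`, which carries `T_{n-1} = o(T_n)` over to `t`. For the expansion, substitute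
`a_1 t_{n-i} = ∑_{j<R} β_j T_{n-i-j} + O(T_{n-i-R})` into `∑_{i<R} T_i a_1 t_{n-i}`: because
`(∑ T_i x^i)(∑ β_j x^j) = 1`, the terms with `i + j < R` add up to `T_n`, and all remaining terms
are `O(T_{n-R}) = O(t_{n-R})`. -/

section Shift

variable {E : Type*} [NormedAddCommGroup E] {f : ℕ → E}

theorem isLittleO_shift_succ (hf : (fun n => f (n - 1)) =o[atTop] f) (k : ℕ) :
    (fun n => f (n - (k + 1))) =o[atTop] (fun n => f (n - k)) := by
  simpa [Function.comp_def, Nat.sub_sub] using hf.comp_tendsto (tendsto_sub_atTop_nat k)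

theorem isBigO_shift_of_le (hf : (fun n => f (n - 1)) =o[atTop] f) {j k : ℕ} (hjk : j ≤ k) :
    (fun n => f (n - k)) =O[atTop] (fun n => f (n - j)) := by
  induction k, hjk using Nat.le_induction with
  | base => exact isBigO_refl _ _
  | succ k _ ih => exact (isLittleO_shift_succ hf k).isBigO.trans ih

theorem isLittleO_shift_of_pos (hf : (fun n => f (n - 1)) =o[atTop] f) {k : ℕ} (hk : 0 < k) :
    (fun n => f (n - k)) =o[atTop] f := by
  obtain ⟨k, rfl⟩ := Nat.exists_eq_add_of_lt hk
  simpa using (isLittleO_shift_succ hf k).trans_isBigO (isBigO_shift_of_le hf k.zero_le)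

end Shift

theorem Asymptotics.IsEquivalent.isLittleO_shift_one {u v : ℕ → ℝ} (huv : u ~[atTop] v)
    (hv : (fun n => v (n - 1)) =o[atTop] v) : (fun n => u (n - 1)) =o[atTop] u := by
  have hshift : (fun n => u (n - 1)) ~[atTop] (fun n => v (n - 1)) :=
    huv.comp_tendsto (tendsto_sub_atTop_nat 1)
  exact (hshift.isBigO.trans_isLittleO hv).trans_isBigO huv.symm.isBigO

theorem mk_mul_mk_eq_one_of_eq_neg_sum {A : Type*} [CommRing A] {T β : ℕ → A} (hT0 : T 0 = 1)
    (hβ0 : β 0 = 1) (hβ : ∀ n, 1 ≤ n → β n = -∑ s ∈ range n, β s * T (n - s)) :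
    mk β * mk T = 1 := by
  ext n
  rw [coeff_mul, Nat.sum_antidiagonal_eq_sum_range_succ (fun i j => coeff i (mk β) * coeff j (mk T))]
  rcases Nat.eq_zero_or_pos n with rfl | hn
  · simp [hT0, hβ0]
  · simp only [coeff_mk, sum_range_succ, Nat.sub_self, hT0, hβ n hn, coeff_one, hn.ne', if_false]
    ring

theorem sum_range_sum_range_eq_of_mk_mul_mk_eq_one {A : Type*} [CommSemiring A] {T β : ℕ → A}
    (hTβ : mk T * mk β = 1) {R : ℕ} (hR : 1 ≤ R) (g : ℕ → A) :
    ∑ i ∈ range R, ∑ j ∈ range R, T i * β j * g (i + j) =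
      g 0 + ∑ i ∈ range R, ∑ j ∈ Ico (R - i) R, T i * β j * g (i + j) := by
  have hlow : ∑ i ∈ range R, ∑ j ∈ range (R - i), T i * β j * g (i + j) = g 0 := by
    rw [← sum_range_diag_flip R (fun i j => T i * β j * g (i + j))]
    have hcoeff : ∀ k, ∑ i ∈ range (k + 1), T i * β (k - i) = if k = 0 then 1 else 0 := by
      intro k
      simpa [coeff_mul, Nat.sum_antidiagonal_eq_sum_range_succ (fun i j => T i * β j),
        coeff_one] using congrArg (coeff k) hTβ
    calc ∑ k ∈ range R, ∑ i ∈ range (k + 1), T i * β (k - i) * g (i + (k - i))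
        = ∑ k ∈ range R, (if k = 0 then 1 else 0) * g k := by
          refine sum_congr rfl fun k _ => ?_
          rw [← hcoeff k, sum_mul]
          refine sum_congr rfl fun i hi => ?_
          rw [Nat.add_sub_cancel' (Nat.lt_succ_iff.mp (mem_range.mp hi))]
      _ = g 0 := by simp [Nat.one_le_iff_ne_zero.mp hR]
  rw [← hlow, ← sum_add_distrib]
  refine sum_congr rfl fun i hi => ?_
  exact (sum_range_add_sum_Ico _ (Nat.sub_le R i)).symm

theorem isEquivalent_of_isBigO_sub_sum {T β u : ℕ → ℝ} {R : ℕ}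
    (hT : (fun n => T (n - 1)) =o[atTop] T) (hR : 1 ≤ R) (hβ0 : β 0 = 1)
    (hu : (fun n => u n - ∑ s ∈ range R, β s * T (n - s)) =O[atTop] (fun n => T (n - R))) :
    u ~[atTop] T := by
  obtain ⟨R, rfl⟩ := Nat.exists_eq_add_of_le' hR
  have htail : (fun n => ∑ s ∈ range R, β (s + 1) * T (n - (s + 1))) =o[atTop] T :=
    IsLittleO.fun_sum fun s _ => (isLittleO_shift_of_pos hT s.succ_pos).const_mul_left _
  have hsplit : u - T = fun n => (u n - ∑ s ∈ range (R + 1), β s * T (n - s)) +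
      ∑ s ∈ range R, β (s + 1) * T (n - (s + 1)) := by
    funext n
    simp only [Pi.sub_apply, sum_range_succ', hβ0, Nat.sub_zero]
    ring
  rw [IsEquivalent, hsplit]
  exact (hu.trans_isLittleO (isLittleO_shift_of_pos hT R.succ_pos)).add htail

theorem isBigO_sub_sum_mul_of_isBigO_sub_sum {T β u : ℕ → ℝ} {R : ℕ} (hTβ : mk T * mk β = 1)
    (hT : (fun n => T (n - 1)) =o[atTop] T) (hR : 1 ≤ R)
    (hu : (fun n => u n - ∑ s ∈ range R, β s * T (n - s)) =O[atTop] (fun n => T (n - R))) :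
    (fun n => T n - ∑ i ∈ range R, T i * u (n - i)) =O[atTop] (fun n => T (n - R)) := by
  set e := fun n => u n - ∑ s ∈ range R, β s * T (n - s) with he
  have hid : ∀ n, T n - ∑ i ∈ range R, T i * u (n - i) =
      -(∑ i ∈ range R, ∑ j ∈ Ico (R - i) R, T i * β j * T (n - (i + j))) -
        ∑ i ∈ range R, T i * e (n - i) := by
    intro n
    have hcauchy := sum_range_sum_range_eq_of_mk_mul_mk_eq_one hTβ hR (fun k => T (n - k))
    have hu' : ∀ i, T i * u (n - i) =
        ∑ j ∈ range R, T i * β j * T (n - (i + j)) + T i * e (n - i) := by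
      intro i
      simp only [he, mul_sub, mul_sum, Nat.sub_sub, mul_assoc]
      ring
    simp only [Nat.sub_zero] at hcauchy
    rw [sum_congr rfl fun i _ => hu' i, sum_add_distrib, hcauchy]
    ring
  have hrem : (fun n => ∑ i ∈ range R, ∑ j ∈ Ico (R - i) R, T i * β j * T (n - (i + j)))
      =O[atTop] fun n => T (n - R) :=
    IsBigO.fun_sum fun i hi => IsBigO.fun_sum fun j hj =>
      (isBigO_shift_of_le hT (by simp only [mem_range, mem_Ico] at hi hj; omega)).const_mul_left _
  have herr : (fun n => ∑ i ∈ range R, T i * e (n - i)) =O[atTop] fun n => T (n - R) := by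
    refine IsBigO.fun_sum fun i _ => IsBigO.const_mul_left ?_ _
    have hshift : (fun n => e (n - i)) =O[atTop] fun n => T (n - (R + i)) := by
      simpa [Function.comp_def, Nat.sub_sub, add_comm] using
        hu.comp_tendsto (tendsto_sub_atTop_nat i)
    exact hshift.trans (isBigO_shift_of_le hT le_self_add)
  simpa only [hid] using hrem.neg_left.sub herr

theorem warlimont_two_implies_three_general (T : ℕ → ℝ) (t : ℕ → ℕ) (a : ℕ → ℝ) (β : ℕ → ℝ) (R : ℕ)
    (h : IsWarlimontTriple T t a) (hR : 1 ≤ R)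
    (hlittle : (fun n => T (n - 1)) =o[atTop] (fun n => T n))
    (hβ0 : β 0 = 1)
    (hβ : ∀ n : ℕ, 1 ≤ n → β n = -∑ s ∈ Finset.range n, β s * T (n - s))
    (h2 : (fun n => a 1 * (t n : ℝ) - ∑ s ∈ Finset.range R, β s * T (n - s)) =O[atTop]
      (fun n => T (n - R))) :
    (fun n => (t (n - 1) : ℝ)) =o[atTop] (fun n => (t n : ℝ)) ∧
      (fun n => T n - a 1 * ∑ s ∈ Finset.range R, T s * (t (n - s) : ℝ)) =O[atTop]
        (fun n => (t (n - R) : ℝ)) := by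
  have ha1 : a 1 ≠ 0 := h.ha1.ne'
  have hTβ : mk T * mk β = 1 := by
    rw [mul_comm]
    exact mk_mul_mk_eq_one_of_eq_neg_sum h.hT0 hβ0 hβ
  have hequiv : (fun n => a 1 * (t n : ℝ)) ~[atTop] T :=
    isEquivalent_of_isBigO_sub_sum hlittle hR hβ0 h2
  constructor
  · have hpred := hequiv.isLittleO_shift_one hlittle
    rwa [isLittleO_const_mul_left_iff ha1, isLittleO_const_mul_right_iff ha1] at hpred
  · have hTt : (fun n => T (n - R)) =O[atTop] fun n => (t (n - R) : ℝ) :=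
      (hequiv.symm.isBigO.trans (isBigO_const_mul_self _ _ _)).comp_tendsto
        (tendsto_sub_atTop_nat R)
    refine ((isBigO_sub_sum_mul_of_isBigO_sub_sum hTβ hlittle hR h2).congr_left
      fun n => ?_).trans hTt
    simp only [mul_sum, mul_left_comm]

theorem warlimont_two_implies_three (T : ℕ → ℝ) (t : ℕ → ℕ) (a : ℕ → ℝ) (β : ℕ → ℝ) (R : ℕ)
    (h : IsWarlimontTriple T t a) (hR : 1 ≤ R)
    (hlog : (fun n => Real.log (a n)) =O[atTop] (fun n => (n : ℝ)))
    (hlittle : (fun n => T (n - 1)) =o[atTop] (fun n => T n))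
    (hβ0 : β 0 = 1)
    (hβ : ∀ n : ℕ, 1 ≤ n → β n = -∑ s ∈ Finset.range n, β s * T (n - s))
    (h2 : (fun n => a 1 * (t n : ℝ) - ∑ s ∈ Finset.range R, β s * T (n - s)) =O[atTop]
      (fun n => T (n - R))) :
    (fun n => (t (n - 1) : ℝ)) =o[atTop] (fun n => (t n : ℝ)) ∧
      (fun n => T n - a 1 * ∑ s ∈ Finset.range R, T s * (t (n - s) : ℝ)) =O[atTop]
        (fun n => (t (n - R) : ℝ)) :=
  warlimont_two_implies_three_general T t a β R h hR hlittle hβ0 hβ h2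
end

section
/- Let (T_n, t_n, a_n) be a Warlimont triple. If t_{n-1} = o(t_n) and T_n = a_1·∑_{s=0}^{R-1} T_s·t_{n-s} + O(t_{n-R}) for a positive integer R, then ∑_{s=R}^{n-R} t_s·t_{n-s} = O(t_{n-R}). -/
open PowerSeries Finset

/-!
All factors of the Euler product have nonnegative coefficients and constant term `1`, so the
`n`-th coefficient of a product over an index set dominates the sum of the `n`-th coefficients of
the products over two disjoint parts of it. Split `{1, …, n}` into the outer indices
`m < R` or `m > n - R`, and the middle ones `R ≤ m ≤ n - R`. The outer part contributes at least
`a₁ ∑_{s<R} T_s t_{n-s}`: take `x^s` from the factors `m < R` (whose coefficient is at least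
`T_s`) and `x^{n-s}` from the single factor `m = n - s` (at least `a₁ t_{n-s}`). The middle part
contributes at least `a₁²/2 (∑_{s=R}^{n-R} t_s t_{n-s} - t_{n/2})`: take `x^s` and `x^{n-s}`
from two distinct factors, or, when `n` is even, `x^{n/2}` twice from the factor `m = n/2`, which
gives `(t_{n/2} choose 2) a₁²`. The hypothesis on `T_n` bounds both contributions together by
`O(t_{n-R})`, and `t_{n/2} ≤ t_{n-R}` for large `n` because `t_{n-1} = o(t_n)` makes `t`
eventually nondecreasing.
-/

namespace PowerSeries

theorem coeff_mul_one_add_C_mul_X_pow_pow {R : Type*} [CommSemiring R] (c : R) {m : ℕ}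
    (hm : m ≠ 0) (e j : ℕ) :
    coeff (m * j) ((1 + C c * X ^ m) ^ e) = e.choose j * c ^ j := by
  have hterm : ∀ k, (C c * X ^ m) ^ k * 1 ^ (e - k) * (e.choose k : R⟦X⟧) =
      C (e.choose k * c ^ k) * X ^ (m * k) := fun k => by
    rw [← map_natCast (C (R := R)), mul_pow, ← map_pow, ← pow_mul]
    simp only [one_pow, mul_one, map_mul]
    ring
  rw [add_comm, add_pow, map_sum]
  simp_rw [hterm, coeff_C_mul_X_pow, mul_right_inj' hm, eq_comm (a := j)]
  rw [sum_ite_eq']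
  split_ifs with hj
  · rfl
  · rw [Nat.choose_eq_zero_of_lt (by simpa [Nat.lt_succ_iff] using hj), Nat.cast_zero, zero_mul]

section Nonneg

variable {R : Type*} [CommSemiring R] [PartialOrder R] [IsOrderedRing R]

def CoeffNonneg (f : R⟦X⟧) : Prop := ∀ n, 0 ≤ coeff n f

namespace CoeffNonneg

theorem one : CoeffNonneg (1 : R⟦X⟧) := fun n => by
  rw [coeff_one]
  split_ifs <;> simp

theorem mul {f g : R⟦X⟧} (hf : CoeffNonneg f) (hg : CoeffNonneg g) : CoeffNonneg (f * g) :=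
  fun n => by
    rw [coeff_mul]
    exact sum_nonneg fun p _ => mul_nonneg (hf p.1) (hg p.2)

theorem pow {f : R⟦X⟧} (hf : CoeffNonneg f) (e : ℕ) : CoeffNonneg (f ^ e) := by
  induction e with
  | zero => simpa using one
  | succ e ih => rw [pow_succ]; exact ih.mul hf

theorem prod {ι : Type*} {s : Finset ι} {f : ι → R⟦X⟧}
    (h : ∀ i ∈ s, CoeffNonneg (f i)) : CoeffNonneg (∏ i ∈ s, f i) :=
  prod_induction f CoeffNonneg (fun _ _ => mul) one h

end CoeffNonneg

theorem sum_le_coeff_mul {f g : R⟦X⟧} (hf : CoeffNonneg f) (hg : CoeffNonneg g) {n : ℕ}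
    {S : Finset ℕ} (hS : ∀ s ∈ S, s ≤ n) {w : ℕ → R}
    (hw : ∀ s ∈ S, w s ≤ coeff s f * coeff (n - s) g) :
    ∑ s ∈ S, w s ≤ coeff n (f * g) := by
  have hinj : Set.InjOn (fun s => (s, n - s)) S := fun _ _ _ _ h => congrArg Prod.fst h
  calc ∑ s ∈ S, w s ≤ ∑ s ∈ S, coeff s f * coeff (n - s) g := sum_le_sum hw
    _ = ∑ p ∈ S.image (fun s => (s, n - s)), coeff p.1 f * coeff p.2 g :=
      (sum_image (f := fun p => coeff p.1 f * coeff p.2 g) hinj).symm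
    _ ≤ ∑ p ∈ antidiagonal n, coeff p.1 f * coeff p.2 g := by
      refine sum_le_sum_of_subset_of_nonneg ?_ fun p _ _ => mul_nonneg (hf p.1) (hg p.2)
      intro p hp
      obtain ⟨s, hs, rfl⟩ := mem_image.1 hp
      simpa [HasAntidiagonal.mem_antidiagonal] using Nat.add_sub_of_le (hS s hs)
    _ = coeff n (f * g) := (coeff_mul n f g).symm

theorem coeff_add_sum_le_coeff_mul {f g : R⟦X⟧} (hf : CoeffNonneg f) (hg : CoeffNonneg g)
    (hg0 : constantCoeff g = 1) {n : ℕ} {S : Finset ℕ} (hS : ∀ s ∈ S, s < n) {w : ℕ → R}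
    (hw : ∀ s ∈ S, w s ≤ coeff s f * coeff (n - s) g) :
    coeff n f + ∑ s ∈ S, w s ≤ coeff n (f * g) := by
  have hnS : n ∉ S := fun h => (hS n h).false
  have := sum_le_coeff_mul hf hg (S := insert n S) (w := fun s => if s = n then coeff n f else w s)
    (fun s hs => (mem_insert.1 hs).elim le_of_eq fun hs => (hS s hs).le) fun s hs => by
      rcases mem_insert.1 hs with rfl | hs
      · simp [hg0]
      · simpa [(hS s hs).ne] using hw s hs
  rwa [sum_insert hnS, if_pos rfl, sum_congr rfl fun s hs => if_neg (hS s hs).ne] at this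

theorem coeff_le_coeff_mul {f g : R⟦X⟧} (hf : CoeffNonneg f) (hg : CoeffNonneg g)
    (hg0 : constantCoeff g = 1) (n : ℕ) : coeff n f ≤ coeff n (f * g) := by
  simpa using coeff_add_sum_le_coeff_mul hf hg hg0 (S := ∅) (n := n) (w := 0) (by simp) (by simp)

theorem coeff_add_coeff_le_coeff_mul {f g : R⟦X⟧} (hf : CoeffNonneg f) (hg : CoeffNonneg g)
    (hf0 : constantCoeff f = 1) (hg0 : constantCoeff g = 1) {n : ℕ} (hn : n ≠ 0) :
    coeff n f + coeff n g ≤ coeff n (f * g) := by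
  simpa using coeff_add_sum_le_coeff_mul hf hg hg0 (S := {0}) (w := fun _ => coeff n g)
    (by simpa [Nat.pos_iff_ne_zero] using hn) (by simp [hf0])

theorem coeff_mul_le_coeff_mul {f₁ f₂ g₁ g₂ : R⟦X⟧} (hg₁ : CoeffNonneg g₁)
    (hg₂ : CoeffNonneg g₂) (h₁ : ∀ n, coeff n g₁ ≤ coeff n f₁)
    (h₂ : ∀ n, coeff n g₂ ≤ coeff n f₂) (n : ℕ) :
    coeff n (g₁ * g₂) ≤ coeff n (f₁ * f₂) := by
  rw [coeff_mul, coeff_mul]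
  exact sum_le_sum fun p _ =>
    mul_le_mul (h₁ p.1) (h₂ p.2) (hg₂ p.2) ((hg₁ p.1).trans (h₁ p.1))

theorem coeff_pow_le_coeff_pow {f g : R⟦X⟧} (hg : CoeffNonneg g)
    (h : ∀ n, coeff n g ≤ coeff n f) (e n : ℕ) : coeff n (g ^ e) ≤ coeff n (f ^ e) := by
  induction e generalizing n with
  | zero => rfl
  | succ e ih =>
    rw [pow_succ, pow_succ]
    exact coeff_mul_le_coeff_mul (hg.pow e) hg ih h n

/-- Compare `f` with `1 + (coeff m f) X^m`, whose `e`-th power is known by the binomial theorem. -/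
theorem choose_mul_pow_le_coeff_pow {f : R⟦X⟧} (hf : CoeffNonneg f)
    (hf0 : constantCoeff f = 1) {m : ℕ} (hm : m ≠ 0) (e j : ℕ) :
    e.choose j * coeff m f ^ j ≤ coeff (m * j) (f ^ e) := by
  have hcoeff : ∀ n, coeff n (1 + C (coeff m f) * X ^ m) =
      if n = 0 then 1 else if n = m then coeff m f else 0 := fun n => by
    rw [map_add, coeff_one, coeff_C_mul_X_pow]
    split_ifs <;> simp_all
  rw [← coeff_mul_one_add_C_mul_X_pow_pow _ hm]
  refine coeff_pow_le_coeff_pow (fun n => ?_) (fun n => ?_) e _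
  · rw [hcoeff]
    split_ifs <;> simp [hf m]
  · rw [hcoeff]
    split_ifs with h0 h1
    · rw [h0, coeff_zero_eq_constantCoeff, hf0]
    · rw [h1]
    · exact hf n

end Nonneg

end PowerSeries

theorem sum_Icc_eq_two_nsmul_add_of_symm {M : Type*} [AddCommMonoid M] (f : ℕ → M) {R n : ℕ}
    (hRn : 2 * R ≤ n) (hf : ∀ s ≤ n, f (n - s) = f s) :
    ∑ s ∈ Icc R (n - R), f s =
      2 • ∑ s ∈ Ico R ((n + 1) / 2), f s + if Even n then f (n / 2) else 0 := by
  have hupper :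
      ∑ s ∈ Ico (n / 2 + 1) (n + 1 - R), f s = ∑ s ∈ Ico R ((n + 1) / 2), f s := by
    rw [← sum_congr rfl fun s hs => hf s (by rw [mem_Ico] at hs; omega),
      sum_Ico_reflect f _ (by omega)]
    congr 2 <;> omega
  have hdiag : ∑ s ∈ Ico ((n + 1) / 2) (n / 2 + 1), f s = if Even n then f (n / 2) else 0 := by
    split_ifs with hn
    · rw [show Ico ((n + 1) / 2) (n / 2 + 1) = {n / 2} by
        ext; rw [mem_Ico, mem_singleton]; grind, sum_singleton]
    · rw [show Ico ((n + 1) / 2) (n / 2 + 1) = ∅ by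
        ext; rw [mem_Ico]; grind, sum_empty]
  rw [← Ico_add_one_right_eq_Icc, show n - R + 1 = n + 1 - R by omega,
    ← sum_Ico_consecutive f (show R ≤ (n + 1) / 2 by omega) (by omega),
    ← sum_Ico_consecutive f (show (n + 1) / 2 ≤ n / 2 + 1 by omega) (by omega),
    hupper, hdiag, two_nsmul]
  abel

open Filter Asymptotics

theorem exists_monotoneOn_Ici_of_isLittleO {u : ℕ → ℝ} (hu : ∀ n, 0 ≤ u n)
    (h : (fun n => u (n - 1)) =o[atTop] u) : ∃ N, MonotoneOn u (Set.Ici N) := by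
  obtain ⟨N, hN⟩ := eventually_atTop.1 (h.bound one_pos)
  refine ⟨N, monotoneOn_nat_Ici_of_le_succ fun n hn => ?_⟩
  simpa [Real.norm_of_nonneg (hu _)] using hN (n + 1) (by omega)

noncomputable def eulerProduct (a : ℕ → ℝ) (t : ℕ → ℕ) (s : Finset ℕ) : ℝ⟦X⟧ :=
  ∏ m ∈ s, innerSeries a m ^ t m

section EulerProduct

variable {a : ℕ → ℝ} {t : ℕ → ℕ}

theorem coeffNonneg_innerSeries (ha : ∀ n, 0 ≤ a n) (m : ℕ) : CoeffNonneg (innerSeries a m) :=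
  fun k => by
    rw [innerSeries, coeff_mk]
    split_ifs
    exacts [ha _, le_rfl]

theorem constantCoeff_innerSeries (ha0 : a 0 = 1) (m : ℕ) :
    constantCoeff (innerSeries a m) = 1 := by
  simp [← coeff_zero_eq_constantCoeff_apply, innerSeries, ha0]

theorem coeff_innerSeries_self {m : ℕ} (hm : m ≠ 0) : coeff m (innerSeries a m) = a 1 := by
  simp [innerSeries, Nat.div_self (Nat.pos_of_ne_zero hm)]

theorem coeffNonneg_eulerProduct (ha : ∀ n, 0 ≤ a n) (s : Finset ℕ) :
    CoeffNonneg (eulerProduct a t s) :=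
  CoeffNonneg.prod fun m _ => (coeffNonneg_innerSeries ha m).pow _

theorem constantCoeff_eulerProduct (ha0 : a 0 = 1) (s : Finset ℕ) :
    constantCoeff (eulerProduct a t s) = 1 := by
  simp [eulerProduct, constantCoeff_innerSeries ha0]

theorem eulerProduct_union {s u : Finset ℕ} (h : Disjoint s u) :
    eulerProduct a t (s ∪ u) = eulerProduct a t s * eulerProduct a t u :=
  prod_union h

theorem coeff_eulerProduct_mono (ha : ∀ n, 0 ≤ a n) (ha0 : a 0 = 1) {s u : Finset ℕ}
    (hsu : s ⊆ u) (d : ℕ) : coeff d (eulerProduct a t s) ≤ coeff d (eulerProduct a t u) := by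
  rw [← union_sdiff_of_subset hsu, eulerProduct_union disjoint_sdiff]
  exact coeff_le_coeff_mul (coeffNonneg_eulerProduct ha s) (coeffNonneg_eulerProduct ha _)
    (constantCoeff_eulerProduct ha0 _) d

theorem choose_mul_pow_le_coeff_eulerProduct (ha : ∀ n, 0 ≤ a n) (ha0 : a 0 = 1)
    {s : Finset ℕ} {m : ℕ} (hm : m ∈ s) (hm0 : m ≠ 0) (j : ℕ) :
    (t m).choose j * a 1 ^ j ≤ coeff (m * j) (eulerProduct a t s) := by
  refine le_trans ?_ (coeff_eulerProduct_mono ha ha0 (singleton_subset_iff.2 hm) _)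
  simpa [eulerProduct, coeff_innerSeries_self hm0] using
    choose_mul_pow_le_coeff_pow (coeffNonneg_innerSeries ha m) (constantCoeff_innerSeries ha0 m)
      hm0 (t m) j

theorem mul_le_coeff_eulerProduct (ha : ∀ n, 0 ≤ a n) (ha0 : a 0 = 1)
    {s : Finset ℕ} {m : ℕ} (hm : m ∈ s) (hm0 : m ≠ 0) :
    t m * a 1 ≤ coeff m (eulerProduct a t s) := by
  simpa using choose_mul_pow_le_coeff_eulerProduct (t := t) ha ha0 hm hm0 1

theorem sq_mul_sum_add_le_coeff_eulerProduct (ha : ∀ n, 0 ≤ a n) (ha0 : a 0 = 1) {R n : ℕ}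
    (hR : 1 ≤ R) (hRn : 2 * R ≤ n) :
    a 1 ^ 2 * ∑ s ∈ Ico R ((n + 1) / 2), (t s : ℝ) * t (n - s) +
        (if Even n then (t (n / 2)).choose 2 * a 1 ^ 2 else 0) ≤
      coeff n (eulerProduct a t (Icc R (n - R))) := by
  set A := eulerProduct a t (Icc R (n / 2))
  set B := eulerProduct a t (Ioc (n / 2) (n - R))
  have hsplit : eulerProduct a t (Icc R (n - R)) = A * B := by
    rw [← eulerProduct_union (disjoint_left.2 fun x hx hx' => by
      rw [mem_Icc] at hx; rw [mem_Ioc] at hx'; omega)]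
    congr 1
    ext x
    simp only [mem_Icc, mem_union, mem_Ioc]
    omega
  have hdiag : (if Even n then (t (n / 2)).choose 2 * a 1 ^ 2 else 0) ≤ coeff n A := by
    split_ifs with hn
    · simpa [Nat.div_two_mul_two_of_even hn] using
        choose_mul_pow_le_coeff_eulerProduct (t := t) ha ha0 (s := Icc R (n / 2)) (m := n / 2)
          (by rw [mem_Icc]; omega) (by omega) 2
    · exact coeffNonneg_eulerProduct ha _ n
  have hcross : ∀ s ∈ Ico R ((n + 1) / 2),
      a 1 ^ 2 * ((t s : ℝ) * t (n - s)) ≤ coeff s A * coeff (n - s) B := fun s hs => by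
    rw [mem_Ico] at hs
    have hA : t s * a 1 ≤ coeff s A :=
      mul_le_coeff_eulerProduct ha ha0 (by rw [mem_Icc]; omega) (by omega)
    have hB : t (n - s) * a 1 ≤ coeff (n - s) B :=
      mul_le_coeff_eulerProduct ha ha0 (by rw [mem_Ioc]; omega) (by omega)
    calc a 1 ^ 2 * ((t s : ℝ) * t (n - s)) = (t s * a 1) * (t (n - s) * a 1) := by ring
      _ ≤ _ := mul_le_mul hA hB (mul_nonneg (Nat.cast_nonneg _) (ha 1))
        ((mul_nonneg (Nat.cast_nonneg _) (ha 1)).trans hA)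
  have hAB := coeff_add_sum_le_coeff_mul (coeffNonneg_eulerProduct ha _)
    (coeffNonneg_eulerProduct ha _) (constantCoeff_eulerProduct ha0 _)
    (fun s hs => by rw [mem_Ico] at hs; omega) hcross
  rw [hsplit, mul_sum]
  linarith

theorem sq_mul_sum_sub_le_two_mul_coeff_eulerProduct (ha : ∀ n, 0 ≤ a n) (ha0 : a 0 = 1)
    {R n : ℕ} (hR : 1 ≤ R) (hRn : 2 * R ≤ n) :
    a 1 ^ 2 * (∑ s ∈ Icc R (n - R), (t s : ℝ) * t (n - s) - t (n / 2)) ≤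
      2 * coeff n (eulerProduct a t (Icc R (n - R))) := by
  have hmid := sq_mul_sum_add_le_coeff_eulerProduct (t := t) ha ha0 hR hRn
  rw [sum_Icc_eq_two_nsmul_add_of_symm _ hRn fun s hs => by rw [Nat.sub_sub_self hs, mul_comm],
    nsmul_eq_mul]
  split_ifs at hmid ⊢ with hn
  · rw [Nat.cast_choose_two] at hmid
    rw [show n - n / 2 = n / 2 by grind, Nat.cast_ofNat]
    linarith
  · nlinarith [mul_nonneg (sq_nonneg (a 1)) (Nat.cast_nonneg (α := ℝ) (t (n / 2)))]

end EulerProduct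

namespace IsWarlimontTriple

variable {T : ℕ → ℝ} {t : ℕ → ℕ} {a : ℕ → ℝ}

theorem eq_coeff_eulerProduct (h : IsWarlimontTriple T t a) (n : ℕ) :
    T n = coeff n (eulerProduct a t (Icc 1 n)) := by
  simpa [eulerProduct] using h.heq n

theorem le_coeff_eulerProduct (h : IsWarlimontTriple T t a) {n : ℕ} {s : Finset ℕ}
    (hs : Icc 1 n ⊆ s) : T n ≤ coeff n (eulerProduct a t s) :=
  h.eq_coeff_eulerProduct n ▸ coeff_eulerProduct_mono h.ha_nonneg h.ha0 hs n

theorem mul_sum_le_coeff_mul (h : IsWarlimontTriple T t a) {R n : ℕ} (hRn : R ≤ n) :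
    a 1 * ∑ s ∈ range R, T s * t (n - s) ≤
      coeff n (eulerProduct a t (Ico 1 R) * eulerProduct a t (Ioc (n - R) n)) := by
  rw [mul_sum]
  refine sum_le_coeff_mul (coeffNonneg_eulerProduct h.ha_nonneg _)
    (coeffNonneg_eulerProduct h.ha_nonneg _) (fun s hs => by rw [mem_range] at hs; omega)
    fun s hs => ?_
  rw [mem_range] at hs
  have hT : T s ≤ coeff s (eulerProduct a t (Ico 1 R)) :=
    h.le_coeff_eulerProduct fun x hx => by rw [mem_Icc] at hx; rw [mem_Ico]; omega
  have ht : t (n - s) * a 1 ≤ coeff (n - s) (eulerProduct a t (Ioc (n - R) n)) :=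
    mul_le_coeff_eulerProduct h.ha_nonneg h.ha0 (by rw [mem_Ioc]; omega) (by omega)
  calc a 1 * (T s * t (n - s)) = T s * (t (n - s) * a 1) := by ring
    _ ≤ _ := mul_le_mul hT ht (mul_nonneg (Nat.cast_nonneg _) h.ha1.le)
      ((h.hT_nonneg s).trans hT)

theorem sq_mul_sum_sub_le (h : IsWarlimontTriple T t a) {R n : ℕ} (hR : 1 ≤ R)
    (hRn : 2 * R ≤ n) :
    a 1 ^ 2 * (∑ s ∈ Icc R (n - R), (t s : ℝ) * t (n - s) - t (n / 2)) ≤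
      2 * (T n - a 1 * ∑ s ∈ range R, T s * t (n - s)) := by
  have hsplit : coeff n (eulerProduct a t (Ico 1 R) * eulerProduct a t (Ioc (n - R) n)) +
      coeff n (eulerProduct a t (Icc R (n - R))) ≤ T n := by
    rw [← eulerProduct_union (disjoint_left.2 fun x hx hx' => by
      rw [mem_Ico] at hx; rw [mem_Ioc] at hx'; omega), h.eq_coeff_eulerProduct]
    refine (coeff_add_coeff_le_coeff_mul (coeffNonneg_eulerProduct h.ha_nonneg _)
      (coeffNonneg_eulerProduct h.ha_nonneg _) (constantCoeff_eulerProduct h.ha0 _)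
      (constantCoeff_eulerProduct h.ha0 _) (by omega)).trans ?_
    rw [← eulerProduct_union (disjoint_left.2 fun x hx hx' => by
      rw [mem_union, mem_Ico, mem_Ioc] at hx; rw [mem_Icc] at hx'; omega)]
    exact coeff_eulerProduct_mono h.ha_nonneg h.ha0 (fun x hx => by
      rw [mem_union, mem_union, mem_Ico, mem_Ioc, mem_Icc] at hx; rw [mem_Icc]; omega) n
  linarith [h.mul_sum_le_coeff_mul (show R ≤ n by omega),
    sq_mul_sum_sub_le_two_mul_coeff_eulerProduct (t := t) h.ha_nonneg h.ha0 hR hRn]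

end IsWarlimontTriple

theorem warlimont_three_implies_four (T : ℕ → ℝ) (t : ℕ → ℕ) (a : ℕ → ℝ) (R : ℕ)
    (h : IsWarlimontTriple T t a) (hR : 1 ≤ R)
    (hlittle : (fun n => (t (n - 1) : ℝ)) =o[atTop] (fun n => (t n : ℝ)))
    (h3 : (fun n => T n - a 1 * ∑ s ∈ Finset.range R, T s * (t (n - s) : ℝ)) =O[atTop]
      (fun n => (t (n - R) : ℝ))) :
    (fun n => ∑ s ∈ Finset.Icc R (n - R), (t s : ℝ) * (t (n - s) : ℝ)) =O[atTop]
      (fun n => (t (n - R) : ℝ)) := by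
  obtain ⟨N, hmono⟩ :=
    exists_monotoneOn_Ici_of_isLittleO (fun n => Nat.cast_nonneg (t n)) hlittle
  obtain ⟨C, hC⟩ := h3.bound
  have ha1 : 0 < a 1 ^ 2 := pow_pos h.ha1 2
  refine IsBigO.of_bound (2 * C / a 1 ^ 2 + 1) ?_
  filter_upwards [hC, eventually_ge_atTop (2 * R + 2 * N)] with n hCn hn
  have hlow := h.sq_mul_sum_sub_le hR (n := n) (by omega)
  have hdiag : (t (n / 2) : ℝ) ≤ t (n - R) :=
    hmono (Set.mem_Ici.2 (by omega)) (Set.mem_Ici.2 (by omega)) (by omega)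
  rw [Real.norm_of_nonneg (sum_nonneg fun _ _ => by positivity), Real.norm_natCast]
  rw [Real.norm_natCast, Real.norm_eq_abs] at hCn
  have hrest : ∑ s ∈ Icc R (n - R), (t s : ℝ) * t (n - s) - t (n / 2) ≤
      2 * C / a 1 ^ 2 * t (n - R) := by
    rw [div_mul_eq_mul_div, le_div_iff₀ ha1]
    nlinarith [le_abs_self (T n - a 1 * ∑ s ∈ range R, T s * (t (n - s) : ℝ))]
  linarith
end

section
/- Let (T_n, t_n, a_n) be a Warlimont triple satisfying, for some integer R > 2: T_{n-1} = o(T_n) and ∑_{s=R}^{n-R} T_s·T_{n-s} = O(T_{n-R}). Then for every positive integer R' ≤ R, ∑_{s=R'}^{n-R'} T_s·T_{n-s} = O(T_{n-R'}). -/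
open PowerSeries Finset

open Filter Asymptotics

/-!
The convolution sum over `[R', n - R']` is the sum over `[R, n - R]` plus the `2 (R - R')`
boundary terms `T_s T_{n-s}` and `T_{n-s} T_s` with `R' ≤ s < R`. The first part is
`O(T_{n-R})` by hypothesis, and each boundary term is `O(T_{n-s})`. Finally
`T_{n-1} = O(T_n)` iterates to `T_{n-j} = O(T_{n-i})` for `i ≤ j`, so everything is
`O(T_{n-R'})`.
-/

theorem Asymptotics.isBigO_comp_sub_of_le {E : Type*} [SeminormedAddCommGroup E] {f : ℕ → E}
    (hf : (fun n => f (n - 1)) =O[atTop] f) {i j : ℕ} (hij : i ≤ j) :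
    (fun n => f (n - j)) =O[atTop] (fun n => f (n - i)) := by
  induction j, hij using Nat.le_induction with
  | base => exact isBigO_refl _ _
  | succ j _ ih =>
    have hstep : (fun n => f (n - (j + 1))) =O[atTop] (fun n => f (n - j)) := by
      simpa only [Function.comp_def, Nat.sub_sub] using hf.comp_tendsto (tendsto_sub_atTop_nat j)
    exact hstep.trans ih

theorem Finset.sum_Icc_mul_sub_eq_add_sum_Ico {M : Type*} [CommSemiring M] (f g : ℕ → M)
    {a b n : ℕ} (hab : a ≤ b) (hbn : 2 * b ≤ n + 1) :
    ∑ s ∈ Icc a (n - a), f s * g (n - s) =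
      ∑ s ∈ Icc b (n - b), f s * g (n - s) +
        ∑ s ∈ Ico a b, (f s * g (n - s) + g s * f (n - s)) := by
  have hreflect : ∑ s ∈ Ico a b, g s * f (n - s) = ∑ s ∈ Ico (n + 1 - b) (n + 1 - a),
      f s * g (n - s) := by
    rw [← sum_Ico_reflect _ a (by omega)]
    refine sum_congr rfl fun s hs => ?_
    rw [Nat.sub_sub_self (by simp only [mem_Ico] at hs; omega), mul_comm]
  rw [sum_add_distrib, hreflect, ← Ico_add_one_right_eq_Icc, ← Ico_add_one_right_eq_Icc,
    ← sum_Ico_consecutive _ hab (show b ≤ n - a + 1 by omega),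
    ← sum_Ico_consecutive _ (show b ≤ n - b + 1 by omega) (show n - b + 1 ≤ n - a + 1 by omega),
    show n - b + 1 = n + 1 - b by omega, show n - a + 1 = n + 1 - a by omega]
  abel

theorem warlimont_axiom_monotone_general (T : ℕ → ℝ) (R : ℕ)
    (hlittle : (fun n => T (n - 1)) =o[atTop] (fun n => T n))
    (hsum : (fun n => ∑ s ∈ Finset.Icc R (n - R), T s * T (n - s)) =O[atTop]
      (fun n => T (n - R))) :
    ∀ R' : ℕ, 1 ≤ R' → R' ≤ R →
      (fun n => ∑ s ∈ Finset.Icc R' (n - R'), T s * T (n - s)) =O[atTop]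
        (fun n => T (n - R')) := by
  intro R' _ hR'R
  have hshift : ∀ {j}, R' ≤ j → (fun n => T (n - j)) =O[atTop] (fun n => T (n - R')) :=
    isBigO_comp_sub_of_le hlittle.isBigO
  have hsplit := (eventually_ge_atTop (2 * R)).mono fun n hn =>
    sum_Icc_mul_sub_eq_add_sum_Ico T T hR'R (n := n) (by omega)
  refine (EventuallyEq.isBigO hsplit).trans ?_
  refine (hsum.trans (hshift hR'R)).add (IsBigO.fun_sum fun s hs => ?_)
  have hs := hshift (mem_Ico.mp hs).1
  exact (hs.const_mul_left (T s)).add (hs.const_mul_left (T s))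

theorem warlimont_axiom_monotone (T : ℕ → ℝ) (t : ℕ → ℕ) (a : ℕ → ℝ) (R : ℕ)
    (h : IsWarlimontTriple T t a) (hR : 2 < R)
    (hlittle : (fun n => T (n - 1)) =o[atTop] (fun n => T n))
    (hsum : (fun n => ∑ s ∈ Finset.Icc R (n - R), T s * T (n - s)) =O[atTop]
      (fun n => T (n - R))) :
    ∀ R' : ℕ, 1 ≤ R' → R' ≤ R →
      (fun n => ∑ s ∈ Finset.Icc R' (n - R'), T s * T (n - s)) =O[atTop]
        (fun n => T (n - R')) :=
  warlimont_axiom_monotone_general T R hlittle hsum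
end
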